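/- Let G₁ be any graph and G₂ a 3r-regular graph admitting a neighborhood 3-balanced coloring ℓ₂. Then the lexicographic product G₁ · G₂ admits a neighborhood 3-balanced coloring, given by ℓ(u, v) = ℓ₂(v). -/

import Mathlib

/-- A coloring `ℓ : V → ZMod 3` of a simple graph `G` is neighborhood 3-balanced if
every vertex has an equal number of neighbors of each of the three colors. -/
def NBalanced {V : Type*} (G : SimpleGraph V) (ℓ : V → ZMod 3) : Prop :=
  ∀ v : V, ∀ i j : ZMod 3,
    {w | G.Adj v w ∧ ℓ w = i}.ncard = {w | G.Adj v w ∧ ℓ w = j}.ncard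

/-- The lexicographic product `G₁ · G₂`: `(u, v)` is adjacent to `(u', v')` iff
`u u' ∈ E(G₁)`, or `u = u'` and `v v' ∈ E(G₂)`. -/
def lexProd {V₁ V₂ : Type*} (G₁ : SimpleGraph V₁) (G₂ : SimpleGraph V₂) :
    SimpleGraph (V₁ × V₂) where
  Adj a b := G₁.Adj a.1 b.1 ∨ (a.1 = b.1 ∧ G₂.Adj a.2 b.2)
  symm := ⟨by
    rintro a b (h | ⟨h, h'⟩)
    · exact Or.inl h.symm
    · exact Or.inr ⟨h.symm, h'.symm⟩⟩
  loopless := ⟨by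
    rintro a (h | ⟨h, h'⟩)
    · exact G₁.ne_of_adj h rfl
    · exact G₂.ne_of_adj h' rfl⟩

/-!
The neighbours of `(u, v)` in `G₁ · G₂` with colour `i` are `N(u) × ℓ₂⁻¹(i)` together with
`{u} × (N(v) ∩ ℓ₂⁻¹(i))`, so there are `|N(u)| · |ℓ₂⁻¹(i)| + r` of them. It remains to see that the
colour classes of `ℓ₂` have equal size: double counting the edges between `V₂` and `ℓ₂⁻¹(i)` gives
`|V₂| · r = |ℓ₂⁻¹(i)| · 3r`, and `r > 0`.
-/

namespace NBalanced

variable {V : Type*} {G : SimpleGraph V} {ℓ : V → ZMod 3}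

theorem three_mul_ncard_adj_color [Finite V] (h : NBalanced G ℓ) (v : V) (i : ZMod 3) :
    3 * {w | G.Adj v w ∧ ℓ w = i}.ncard = {w | G.Adj v w}.ncard := by
  have hsplit : {w | G.Adj v w} = ⋃ k : ZMod 3, {w | G.Adj v w ∧ ℓ w = k} := by
    ext w; simp
  rw [hsplit, Set.ncard_iUnion_of_finite (fun _ ↦ Set.toFinite _), finsum_eq_sum_of_fintype]
  · simp [h v _ i, ZMod.card]
  · intro k k' hkk'
    exact Set.disjoint_left.2 fun w hk hk' ↦ hkk' (hk.2.symm.trans hk'.2)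

theorem ncard_adj_color [Finite V] (h : NBalanced G ℓ) {r : ℕ}
    (hreg : ∀ v, {w | G.Adj v w}.ncard = 3 * r) (v : V) (i : ZMod 3) :
    {w | G.Adj v w ∧ ℓ w = i}.ncard = r := by
  have := h.three_mul_ncard_adj_color v i
  rw [hreg] at this
  omega

theorem three_mul_ncard_color [Fintype V] (h : NBalanced G ℓ) {r : ℕ} (hr : 0 < r)
    (hreg : ∀ v, {w | G.Adj v w}.ncard = 3 * r) (i : ZMod 3) :
    3 * {w | ℓ w = i}.ncard = Fintype.card V := by
  classical
  have hdouble := Finset.card_mul_eq_card_mul G.Adj (s := Finset.univ)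
    (t := {w | ℓ w = i}) (m := r) (n := 3 * r) ?_ ?_
  · rw [Set.ncard_eq_toFinset_card', Set.toFinset_ofPred]
    rw [Finset.card_univ] at hdouble
    exact Nat.eq_of_mul_eq_mul_right hr (by linarith)
  · intro v _
    rw [← h.ncard_adj_color hreg v i, ← Set.ncard_coe_finset]
    congr 1; ext w; simp [and_comm]
  · intro w _
    rw [← hreg w, ← Set.ncard_coe_finset]
    congr 1; ext v; simp [G.adj_comm]

end NBalanced

/-- Stated with `encard`, since `ncard` is `0` on infinite sets and `p.1` may have infinitely many
neighbours. -/
theorem encard_lexProd_adj_color {V₁ V₂ α : Type*} (G₁ : SimpleGraph V₁) (G₂ : SimpleGraph V₂)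
    (ℓ : V₂ → α) (p : V₁ × V₂) (i : α) :
    {q | (lexProd G₁ G₂).Adj p q ∧ ℓ q.2 = i}.encard =
      {u | G₁.Adj p.1 u}.encard * {w | ℓ w = i}.encard + {w | G₂.Adj p.2 w ∧ ℓ w = i}.encard := by
  have hsplit : {q | (lexProd G₁ G₂).Adj p q ∧ ℓ q.2 = i} =
      {u | G₁.Adj p.1 u} ×ˢ {w | ℓ w = i} ∪ {p.1} ×ˢ {w | G₂.Adj p.2 w ∧ ℓ w = i} := by
    ext ⟨u, w⟩
    simp only [lexProd, Set.mem_ofPred_eq, Set.mem_union, Set.mem_prod, Set.mem_singleton_iff]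
    grind
  have hdisj : Disjoint ({u | G₁.Adj p.1 u} ×ˢ {w | ℓ w = i})
      ({p.1} ×ˢ {w | G₂.Adj p.2 w ∧ ℓ w = i}) :=
    Set.disjoint_left.2 fun q hq hq' ↦ G₁.loopless.irrefl p.1 (hq'.1 ▸ hq.1)
  rw [hsplit, Set.encard_union_eq hdisj, Set.encard_prod, Set.singleton_prod,
    (Prod.mk_right_injective p.1).encard_image]

theorem NBalanced.lexProd {V₁ V₂ : Type*} [Finite V₂] (G₁ : SimpleGraph V₁) {G₂ : SimpleGraph V₂}
    {ℓ : V₂ → ZMod 3} (h : NBalanced G₂ ℓ)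
    (hcolor : ∀ i j, {w | ℓ w = i}.ncard = {w | ℓ w = j}.ncard) :
    NBalanced (lexProd G₁ G₂) (fun p ↦ ℓ p.2) := by
  intro p i j
  have hfin : ∀ s : Set V₂, (s.ncard : ℕ∞) = s.encard := fun s ↦ s.toFinite.cast_ncard_eq
  rw [Set.ncard_def, Set.ncard_def, encard_lexProd_adj_color, encard_lexProd_adj_color,
    ← hfin, ← hfin, ← hfin, ← hfin, h p.2 i j, hcolor i j]

theorem stmt17 {V₁ V₂ : Type*} [Fintype V₂] (G₁ : SimpleGraph V₁)
    (G₂ : SimpleGraph V₂) (r : ℕ) (hr : 0 < r)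
    (hreg₂ : ∀ v, {w | G₂.Adj v w}.ncard = 3 * r)
    (ℓ₂ : V₂ → ZMod 3) (h₂ : NBalanced G₂ ℓ₂) :
    NBalanced (lexProd G₁ G₂) (fun p => ℓ₂ p.2) :=
  h₂.lexProd G₁ fun i j ↦ by
    have hi := h₂.three_mul_ncard_color hr hreg₂ i
    have hj := h₂.three_mul_ncard_color hr hreg₂ j
    omega
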